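/- arXiv:2205.11924 — 2 statements merged into one kernel-verified Lean document; each statement's English description precedes it below -/
import Mathlib

section
/- Let d ≥ 1 and let A be a nontrivial finite abelian group. Let G = A ≀ ℤ^d be the wreath product, i.e., the semidirect product (⊕_{ℤ^d} A) ⋊ ℤ^d where ℤ^d acts on the direct sum of copies of A indexed by ℤ^d by translating coordinates. Then the base subgroup ℤ^d (the canonical copy of ℤ^d in the semidirect product) is a non-foldable subset of G, and G has a Schreier growth gap n^d. -/
/-- The ball of radius `n` in `G` w.r.t. `S`: products of at most `n` elements of `S`. -/
def wordBall {G : Type*} [Group G] (S : Set G) (n : ℕ) : Set G :=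
  {g | ∃ l : List G, l.length ≤ n ∧ (∀ s ∈ l, s ∈ S) ∧ l.prod = g}

/-- The growth function of the action of `G` on `X`, relative to the generating set `S`:
`vol_{G,X}(n)` is the maximal cardinality of a ball of radius `n` in the Schreier graph. -/
noncomputable def actionGrowth (G : Type*) [Group G] (X : Type*) [MulAction G X]
    (S : Set G) (n : ℕ) : ℕ :=
  ⨆ x : X, Set.ncard ((fun g : G => g • x) '' wordBall S n)

/-- `G` has a Schreier growth gap `f` if for every finite symmetric generating set `S` and every
faithful nonempty `G`-set `X` there is `C ≥ 1` with `f n ≤ C * vol_{G,X}(C * n)` for `n ≥ 1`. -/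
def SchreierGrowthGap (G : Type*) [Group G] (f : ℕ → ℝ) : Prop :=
  ∀ (S : Set G), S.Finite → (∀ s ∈ S, s⁻¹ ∈ S) → Subgroup.closure S = ⊤ →
    ∀ (X : Type*) [MulAction G X] [Nonempty X] [FaithfulSMul G X],
      ∃ C : ℕ, 1 ≤ C ∧ ∀ n : ℕ, 1 ≤ n →
        f n ≤ (C : ℝ) * (actionGrowth G X S (C * n) : ℝ)

/-- A subset `L` of a group `G` is non-foldable if for every faithful nonempty `G`-set `X` and
every finite subset `s ⊆ L` there exists `x ∈ X` on which the orbital map is injective. -/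
def NonFoldableSubset {G : Type*} [Group G] (L : Set G) : Prop :=
  ∀ (X : Type*) [MulAction G X] [Nonempty X] [FaithfulSMul G X],
    ∀ s : Set G, s ⊆ L → s.Finite → ∃ x : X, Set.InjOn (fun g : G => g • x) s

/-- The translation action of `ℤ^d` on `⊕_{ℤ^d} A`, as a homomorphism to the automorphism
group of the (multiplicatively written) base group of the wreath product `A ≀ ℤ^d`. -/
noncomputable def wreathShift (d : ℕ) (A : Type*) [AddCommGroup A] :
    Multiplicative (Fin d → ℤ) →* MulAut (Multiplicative ((Fin d → ℤ) →₀ A)) :=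
  MonoidHom.mk'
    (fun q => AddEquiv.toMultiplicative (Finsupp.domCongr (Equiv.addLeft q.toAdd)))
    (by
      intro a b
      refine MulEquiv.ext fun f => ?_
      show (Finsupp.domCongr (M := A) (Equiv.addLeft (a*b).toAdd)) f
          = (Finsupp.domCongr (Equiv.addLeft a.toAdd))
              ((Finsupp.domCongr (Equiv.addLeft b.toAdd)) f)
      ext x
      show (Multiplicative.toAdd f) (-(a*b).toAdd + x)
          = (Multiplicative.toAdd f) (-b.toAdd + (-a.toAdd + x))
      rw [toAdd_mul, neg_add_rev, add_assoc])

/-- The wreath product `A ≀ ℤ^d`: the semidirect product `(⊕_{ℤ^d} A) ⋊ ℤ^d` where `ℤ^d`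
acts on the direct sum by translating coordinates. -/
noncomputable abbrev WreathProd (d : ℕ) (A : Type*) [AddCommGroup A] :=
  SemidirectProduct (Multiplicative ((Fin d → ℤ) →₀ A)) (Multiplicative (Fin d → ℤ))
    (wreathShift d A)

/-!
Let `D ⊆ ℤ^d ∖ {0}` be finite and suppose that every point of a faithful `A ≀ ℤ^d`-set `X` is
fixed by some `c ∈ D`. Fix `x ∈ X` and write `B = ⊕_{ℤ^d} A` additively. Each `f • x`, `f ∈ B`, is
fixed by some `c ∈ D`, and the `f` that work for a given `c` form a coset of
`U_c = (1 - c)⁻¹ (Stab_B x)` (or are none). By B. H. Neumann's lemma some `U_c` has index at most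
`|D|`; it is `c`-invariant, so `c^{|D|!}` acts trivially on `B / U_c`, i.e. `(1 - c)(c^{|D|!} - 1)`
maps `B` into `Stab_B x`. Embed the group algebra `𝔽_p[ℤ^d]` into `B` through an element of order
`p` of `A`: the product over `c ∈ D` of `(1 - c)(c^{|D|!} - 1)` is nonzero, as `𝔽_p[ℤ^d]` is a
domain, yet it fixes every point of `X`, contradicting faithfulness. Hence some point is moved by
every `c ∈ D`, which is non-foldability of `ℤ^d`. For the growth gap, a point whose orbit map is
injective on the box `[0, n)^d` sees `n^d` points in a ball of radius `O(n)`.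
-/

open scoped Pointwise

universe u v

section WordBall

variable {G : Type*} [Group G] {S : Set G}

theorem one_mem_wordBall (n : ℕ) : (1 : G) ∈ wordBall S n :=
  ⟨[], Nat.zero_le n, by simp, rfl⟩

theorem wordBall_mono {m n : ℕ} (h : m ≤ n) : wordBall S m ⊆ wordBall S n :=
  fun _ ⟨l, hl, hS, hprod⟩ => ⟨l, hl.trans h, hS, hprod⟩

theorem mul_mem_wordBall {g g' : G} {m n : ℕ} (hg : g ∈ wordBall S m)
    (hg' : g' ∈ wordBall S n) : g * g' ∈ wordBall S (m + n) := by
  obtain ⟨l, hl, hS, rfl⟩ := hg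
  obtain ⟨l', hl', hS', rfl⟩ := hg'
  refine ⟨l ++ l', by simp only [List.length_append]; omega, fun s hs => ?_, List.prod_append⟩
  exact (List.mem_append.1 hs).elim (hS s) (hS' s)

theorem pow_mem_wordBall {g : G} {n : ℕ} (hg : g ∈ wordBall S n) (k : ℕ) :
    g ^ k ∈ wordBall S (k * n) := by
  induction k with
  | zero => simpa using one_mem_wordBall 0
  | succ k ih => simpa [pow_succ, add_mul] using mul_mem_wordBall ih hg

theorem wordBall_finite (hS : S.Finite) (n : ℕ) : (wordBall S n).Finite := by
  have := hS.to_subtype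
  refine ((List.finite_length_le S n).image fun l => (l.map (↑)).prod).subset ?_
  rintro _ ⟨l, hl, hlS, rfl⟩
  lift l to List S using hlS
  exact ⟨l, by simpa using hl, rfl⟩

theorem exists_mem_wordBall (hsym : ∀ s ∈ S, s⁻¹ ∈ S) (hcl : Subgroup.closure S = ⊤) (g : G) :
    ∃ n, g ∈ wordBall S n := by
  have hg : g ∈ (Subgroup.closure S).toSubmonoid := hcl ▸ Subgroup.mem_top g
  rw [Subgroup.closure_toSubmonoid] at hg
  obtain ⟨l, hlS, rfl⟩ := Submonoid.exists_list_of_mem_closure hg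
  refine ⟨l.length, l, le_rfl, fun s hs => ?_, rfl⟩
  rcases hlS s hs with h | h
  · exact h
  · simpa using hsym _ h

end WordBall

theorem ncard_le_actionGrowth {G X : Type*} [Group G] [MulAction G X] {S : Set G}
    (hS : S.Finite) {n : ℕ} {T : Set G} (hT : T ⊆ wordBall S n) {x : X}
    (hx : Set.InjOn (fun g : G => g • x) T) : T.ncard ≤ actionGrowth G X S n := by
  have hbdd : BddAbove (Set.range fun y : X => ((fun g : G => g • y) '' wordBall S n).ncard) :=
    ⟨(wordBall S n).ncard, by rintro _ ⟨y, rfl⟩; exact Set.ncard_image_le (wordBall_finite hS n)⟩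
  calc T.ncard = ((fun g : G => g • x) '' T).ncard := (hx.ncard_image).symm
    _ ≤ ((fun g : G => g • x) '' wordBall S n).ncard :=
      Set.ncard_le_ncard (Set.image_mono hT) ((wordBall_finite hS n).image _)
    _ ≤ actionGrowth G X S n := le_ciSup hbdd x

open Multiplicative in
theorem map_ofAdd_natCast_mem_wordBall {G : Type*} [Group G] {S : Set G} {d m : ℕ}
    (ι : Multiplicative (Fin d → ℤ) →* G) (hm : ∀ i, ι (ofAdd (Pi.single i 1)) ∈ wordBall S m)
    (q : Fin d → ℕ) : ι (ofAdd fun i => (q i : ℤ)) ∈ wordBall S ((∑ i, q i) * m) := by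
  classical
  have key : ∀ t : Finset (Fin d),
      ι (ofAdd (∑ i ∈ t, (Pi.single i (q i : ℤ) : Fin d → ℤ))) ∈
        wordBall S ((∑ i ∈ t, q i) * m) := by
    intro t
    induction t using Finset.induction_on with
    | empty => simpa using one_mem_wordBall 0
    | insert i t hi ih =>
      rw [Finset.sum_insert hi, Finset.sum_insert hi, ofAdd_add, map_mul, add_mul]
      refine mul_mem_wordBall ?_ ih
      have : (Pi.single i (q i : ℤ) : Fin d → ℤ) = q i • Pi.single i 1 := by simp [← Pi.single_smul]
      rw [this, ofAdd_nsmul, map_pow]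
      exact pow_mem_wordBall (hm i) _
  simpa [Finset.univ_sum_single] using key Finset.univ

open Multiplicative in
theorem map_ofAdd_natCast_mem_wordBall_of_lt {G : Type*} [Group G] {S : Set G} {d m n : ℕ}
    (ι : Multiplicative (Fin d → ℤ) →* G) (hm : ∀ i, ι (ofAdd (Pi.single i 1)) ∈ wordBall S m)
    {q : Fin d → ℕ} (hq : ∀ i, q i < n) : ι (ofAdd fun i => (q i : ℤ)) ∈ wordBall S (d * n * m) := by
  have hsum : ∑ i, q i ≤ d * n := by
    simpa using Finset.sum_le_sum (s := Finset.univ) fun i _ => (hq i).le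
  exact wordBall_mono (Nat.mul_le_mul_right m hsum) (map_ofAdd_natCast_mem_wordBall ι hm q)

theorem exists_injOn_smul_of_forall_exists_smul_ne {K G : Type*} [Group K] [Group G]
    {ι : K →* G} (hι : Function.Injective ι) {X : Type*} [MulAction G X]
    (h : ∀ D : Finset K, 1 ∉ D → ∃ x : X, ∀ k ∈ D, ι k • x ≠ x) {s : Set G}
    (hs : s ⊆ Set.range ι) (hfin : s.Finite) : ∃ x : X, Set.InjOn (fun g : G => g • x) s := by
  classical
  let s' := (hfin.preimage hι.injOn).toFinset
  obtain ⟨x, hx⟩ := h (((s' ×ˢ s').filter fun p => p.1 ≠ p.2).image fun p => p.1⁻¹ * p.2) (by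
    simp only [Finset.mem_image, Finset.mem_filter, not_exists, not_and]
    intro p hp h1
    exact hp.2 (inv_mul_eq_one.1 h1))
  refine ⟨x, fun g hg g' hg' hgg' => ?_⟩
  obtain ⟨k, rfl⟩ := hs hg
  obtain ⟨k', rfl⟩ := hs hg'
  by_contra hne
  refine hx (k⁻¹ * k') (Finset.mem_image.2 ⟨(k, k'), ?_, rfl⟩) ?_
  · simpa [s', hg, hg'] using fun h => hne (congrArg ι h)
  · rw [map_mul, map_inv, mul_smul, inv_smul_eq_iff]
    exact hgg'.symm

open Multiplicative in
theorem schreierGrowthGap_of_nonFoldableSubset_range {G : Type u} [Group G] {d : ℕ}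
    {ι : Multiplicative (Fin d → ℤ) →* G} (hι : Function.Injective ι)
    (hL : NonFoldableSubset.{u, v} (Set.range ι)) :
    SchreierGrowthGap.{u, v} G (fun n => (n : ℝ) ^ d) := by
  intro S hS hsym hcl X _ _ _
  choose m hm using fun i => exists_mem_wordBall hsym hcl (ι (ofAdd (Pi.single i 1)))
  set M := ∑ i, m i
  have hM : ∀ i, ι (ofAdd (Pi.single i 1)) ∈ wordBall S M := fun i =>
    wordBall_mono (Finset.single_le_sum (fun j _ => Nat.zero_le (m j)) (Finset.mem_univ i)) (hm i)
  refine ⟨d * M + 1, by omega, fun n hn => ?_⟩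
  let box : Finset (Fin d → ℕ) := Fintype.piFinset fun _ => Finset.range n
  let embed : (Fin d → ℕ) → G := fun q => ι (ofAdd fun i => (q i : ℤ))
  have hembed : Function.Injective embed := fun q q' h => by
    funext i
    exact_mod_cast congrFun (ofAdd.injective (hι h)) i
  have hball : embed '' box ⊆ wordBall S ((d * M + 1) * n) := by
    rintro _ ⟨q, hq, rfl⟩
    refine wordBall_mono ?_ (map_ofAdd_natCast_mem_wordBall_of_lt ι hM
      fun i => Finset.mem_range.1 (Fintype.mem_piFinset.1 hq i))
    rw [add_mul, one_mul, mul_right_comm]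
    exact Nat.le_add_right _ _
  obtain ⟨x, hx⟩ := hL X (embed '' box) (Set.image_subset_iff.2 fun q _ => ⟨_, rfl⟩)
    (box.finite_toSet.image embed)
  have hcard : n ^ d ≤ actionGrowth G X S ((d * M + 1) * n) := by
    have := ncard_le_actionGrowth hS hball hx
    rwa [hembed.injOn.ncard_image, Set.ncard_coe_finset, Fintype.card_piFinset_const,
      Finset.card_range] at this
  calc (n : ℝ) ^ d ≤ actionGrowth G X S ((d * M + 1) * n) := by exact_mod_cast hcard
    _ ≤ _ := le_mul_of_one_le_left (Nat.cast_nonneg _) (by norm_cast; omega)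

theorem MulEquiv.pow_factorial_apply_div_mem {N : Type*} [Group N] (σ : N ≃* N)
    (U : Subgroup N) [U.Normal] [U.FiniteIndex] (hσ : ∀ f, σ f ∈ U ↔ f ∈ U) {n : ℕ}
    (hn : U.index ≤ n) (f : N) : (σ ^ n.factorial) f / f ∈ U := by
  have hmap : U.map σ.toMonoidHom = U := by
    ext f
    refine ⟨?_, fun hf => ⟨σ.symm f, by simpa [← hσ (σ.symm f)] using hf, by simp⟩⟩
    rintro ⟨f, hf, rfl⟩
    exact (hσ f).2 hf
  let τ : Equiv.Perm (N ⧸ U) := (QuotientGroup.congr U U σ hmap).toEquiv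
  have hτ_pow : ∀ k : ℕ, ∀ f : N, (τ ^ k) (f : N ⧸ U) = ((σ ^ k) f : N ⧸ U) := by
    intro k
    induction k with
    | zero => simp
    | succ k ih =>
      intro f
      rw [pow_succ, Equiv.Perm.mul_apply, pow_succ, MulAut.mul_apply]
      exact ih (σ f)
  have hτ : τ ^ n.factorial = 1 := by
    rw [← orderOf_dvd_iff_pow_eq_one]
    refine (orderOf_dvd_natCard τ).trans ?_
    rw [Nat.card_perm, ← Subgroup.index_eq_card]
    exact Nat.factorial_dvd_factorial hn
  have := hτ_pow n.factorial f
  rwa [hτ, Equiv.Perm.one_apply, eq_comm, QuotientGroup.eq_iff_div_mem] at this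

namespace SemidirectProduct

variable {N H : Type*} [CommGroup N] [Group H] (φ : H →* MulAut N)
  {X : Type*} [MulAction (N ⋊[φ] H) X]

def baseStabilizer (x : X) : Subgroup N :=
  (MulAction.stabilizer (N ⋊[φ] H) x).comap inl

/-- In additive notation for `N`, the operator `1 - h`. -/
def divAut (h : H) : N →* N :=
  MonoidHom.id N / (φ h : N →* N)

variable {φ}

theorem mem_baseStabilizer {x : X} {f : N} :
    f ∈ baseStabilizer φ x ↔ (inl f : N ⋊[φ] H) • x = x :=
  Iff.rfl

theorem divAut_apply (h : H) (f : N) : divAut φ h f = f / φ h f :=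
  rfl

theorem divAut_aut (h : H) (f : N) : divAut φ h (φ h f) = φ h (divAut φ h f) := by
  simp only [divAut_apply, map_div]

theorem inr_smul_inl_smul (h : H) (f : N) (y : X) :
    (inr h : N ⋊[φ] H) • (inl f : N ⋊[φ] H) • y =
      (inl (φ h f) : N ⋊[φ] H) • (inr h : N ⋊[φ] H) • y := by
  rw [smul_smul, smul_smul, inl_aut, map_inv, inv_mul_cancel_right]

theorem baseStabilizer_inl_smul (b : N) (x : X) :
    baseStabilizer φ ((inl b : N ⋊[φ] H) • x) = baseStabilizer φ x := by
  ext f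
  rw [mem_baseStabilizer, mem_baseStabilizer, smul_smul, ← map_mul, mul_comm, map_mul,
    ← smul_smul, smul_left_cancel_iff]

theorem aut_mem_baseStabilizer_iff {h : H} {y : X} (hy : (inr h : N ⋊[φ] H) • y = y) (f : N) :
    φ h f ∈ baseStabilizer φ y ↔ f ∈ baseStabilizer φ y := by
  have hconj : (inl (φ h f) : N ⋊[φ] H) • y = (inr h : N ⋊[φ] H) • (inl f : N ⋊[φ] H) • y := by
    rw [inr_smul_inl_smul, hy]
  rw [mem_baseStabilizer, mem_baseStabilizer, hconj, smul_eq_iff_eq_inv_smul,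
    inv_smul_eq_iff.mpr hy.symm]

theorem inr_smul_inl_smul_eq_iff (h : H) (f : N) (x : X) :
    (inr h : N ⋊[φ] H) • (inl f : N ⋊[φ] H) • x = (inl f : N ⋊[φ] H) • x ↔
      (inl (divAut φ h f) : N ⋊[φ] H) • x = (inr h : N ⋊[φ] H) • x := by
  rw [inr_smul_inl_smul, divAut_apply, div_eq_inv_mul, map_mul, map_inv, mul_smul,
    inv_smul_eq_iff, eq_comm]

theorem setOf_inr_smul_inl_smul_eq_leftCoset {h : H} {x : X} {b : N}
    (hb : (inr h : N ⋊[φ] H) • (inl b : N ⋊[φ] H) • x = (inl b : N ⋊[φ] H) • x) :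
    {f : N | (inr h : N ⋊[φ] H) • (inl f : N ⋊[φ] H) • x = (inl f : N ⋊[φ] H) • x} =
      b • ((baseStabilizer φ x).comap (divAut φ h) : Set N) := by
  ext f
  rw [inr_smul_inl_smul_eq_iff] at hb
  rw [Set.mem_ofPred_eq, inr_smul_inl_smul_eq_iff, mem_leftCoset_iff, SetLike.mem_coe,
    Subgroup.mem_comap, mem_baseStabilizer, map_mul, map_inv, map_mul, map_inv, mul_smul,
    inv_smul_eq_iff, hb]

theorem exists_index_comap_divAut_baseStabilizer_le (D : Finset H)
    (hD : ∀ y : X, ∃ h ∈ D, (inr h : N ⋊[φ] H) • y = y) (x : X) :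
    ∃ h ∈ D, ∃ b : N,
      (inr h : N ⋊[φ] H) • (inl b : N ⋊[φ] H) • x = (inl b : N ⋊[φ] H) • x ∧
      ((baseStabilizer φ x).comap (divAut φ h)).FiniteIndex ∧
      ((baseStabilizer φ x).comap (divAut φ h)).index ≤ D.card := by
  classical
  let V : H → Set N :=
    fun h => {f | (inr h : N ⋊[φ] H) • (inl f : N ⋊[φ] H) • x = (inl f : N ⋊[φ] H) • x}
  let s := D.filter fun h => (V h).Nonempty
  let b : H → N := fun h => if hV : (V h).Nonempty then hV.some else 1
  have hb : ∀ h ∈ s, b h ∈ V h := fun h hs => by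
    simp only [b, dif_pos (Finset.mem_filter.1 hs).2, Set.Nonempty.some_mem]
  have hcover : ⋃ h ∈ s, b h • ((baseStabilizer φ x).comap (divAut φ h) : Set N) = Set.univ := by
    refine Set.eq_univ_of_forall fun f => ?_
    obtain ⟨h, hD, hf⟩ := hD ((inl f : N ⋊[φ] H) • x)
    have hs : h ∈ s := Finset.mem_filter.2 ⟨hD, f, hf⟩
    refine Set.mem_biUnion hs ?_
    rw [← setOf_inr_smul_inl_smul_eq_leftCoset (hb h hs)]
    exact hf
  obtain ⟨h, hs, hfin, hindex⟩ := Subgroup.exists_index_le_card_of_leftCoset_cover hcover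
  exact ⟨h, (Finset.mem_filter.1 hs).1, b h, hb h hs, hfin,
    hindex.trans (Finset.card_filter_le _ _)⟩

theorem exists_forall_divAut_pow_div_mem_baseStabilizer (D : Finset H)
    (hD : ∀ y : X, ∃ h ∈ D, (inr h : N ⋊[φ] H) • y = y) (x : X) :
    ∃ h ∈ D, ∀ f : N, divAut φ h (φ (h ^ D.card.factorial) f / f) ∈ baseStabilizer φ x := by
  obtain ⟨h, hD, b, hb, hfin, hindex⟩ := exists_index_comap_divAut_baseStabilizer_le D hD x
  refine ⟨h, hD, fun f => ?_⟩
  have hinv : ∀ f, φ h f ∈ baseStabilizer φ x ↔ f ∈ baseStabilizer φ x := by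
    rw [← baseStabilizer_inl_smul b x]
    exact aut_mem_baseStabilizer_iff hb
  have := (φ h).pow_factorial_apply_div_mem _
    (fun f => by rw [Subgroup.mem_comap, Subgroup.mem_comap, divAut_aut, hinv]) hindex f
  rwa [map_pow]

end SemidirectProduct

theorem ZMod.lift_zmultiplesHom_injective {A : Type*} [AddCommGroup A] {n : ℕ} [NeZero n]
    {a : A} (ha : addOrderOf a = n) :
    Function.Injective (ZMod.lift n ⟨zmultiplesHom A a, by simp [← ha]⟩) := by
  refine (injective_iff_map_eq_zero _).2 fun z hz => ?_
  have hval : z = ((z.val : ℤ) : ZMod n) := by simp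
  rw [hval, ZMod.lift_coe] at hz
  rw [hval, Int.cast_natCast, ZMod.natCast_eq_zero_iff]
  subst ha
  rwa [addOrderOf_dvd_iff_nsmul_eq_zero, ← natCast_zsmul]

namespace AddMonoidAlgebra

variable {R A Γ : Type*} [Semiring R] [AddCommMonoid A]

noncomputable def mapCoeff (e : R →+ A) : AddMonoidAlgebra R Γ →+ (Γ →₀ A) :=
  (Finsupp.mapRange.addMonoidHom e).comp coeffAddEquiv.toAddMonoidHom

theorem mapCoeff_single (e : R →+ A) (q : Γ) (z : R) :
    mapCoeff e (single q z) = Finsupp.single q (e z) :=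
  Finsupp.mapRange_single (hf := map_zero e)

theorem mapCoeff_injective {e : R →+ A} (he : Function.Injective e) :
    Function.Injective (mapCoeff e : AddMonoidAlgebra R Γ →+ (Γ →₀ A)) :=
  (Finsupp.mapRange_injective e (map_zero e) he).comp coeffAddEquiv.injective

theorem domCongr_addLeft_mapCoeff [AddGroup Γ] (e : R →+ A) (q : Γ)
    (r : AddMonoidAlgebra R Γ) :
    Finsupp.domCongr (Equiv.addLeft q) (mapCoeff e r) = mapCoeff e (single q 1 * r) := by
  induction r using AddMonoidAlgebra.induction_linear with
  | zero => simp
  | add f g hf hg => rw [map_add, map_add, mul_add, map_add, hf, hg]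
  | single s z =>
    rw [mapCoeff_single, single_mul_single, one_mul, mapCoeff_single, Finsupp.domCongr_apply,
      Finsupp.equivMapDomain_single, Equiv.coe_addLeft]

theorem single_ne_one [Nontrivial R] [AddMonoid Γ] {c : Γ} (hc : c ≠ 0) :
    single c (1 : R) ≠ 1 := by
  rw [one_def, Ne, single_left_inj one_ne_zero]
  exact hc

end AddMonoidAlgebra

namespace WreathProd

open SemidirectProduct Multiplicative AddMonoidAlgebra

variable {d : ℕ} {A : Type*} [AddCommGroup A]

theorem wreathShift_ofAdd_mapCoeff {R : Type*} [Semiring R] (e : R →+ A)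
    (c : Multiplicative (Fin d → ℤ)) (r : AddMonoidAlgebra R (Fin d → ℤ)) :
    wreathShift d A c (ofAdd (mapCoeff e r)) = ofAdd (mapCoeff e (single c.toAdd 1 * r)) :=
  congrArg ofAdd (domCongr_addLeft_mapCoeff e c.toAdd r)

theorem divAut_wreathShift_pow_ofAdd_mapCoeff {R : Type*} [Ring R] (e : R →+ A)
    (c : Multiplicative (Fin d → ℤ)) (M : ℕ) (r : AddMonoidAlgebra R (Fin d → ℤ)) :
    divAut (wreathShift d A) c
        (wreathShift d A (c ^ M) (ofAdd (mapCoeff e r)) / ofAdd (mapCoeff e r)) =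
      ofAdd (mapCoeff e ((1 - single c.toAdd 1) * ((single (c ^ M).toAdd 1 - 1) * r))) := by
  rw [wreathShift_ofAdd_mapCoeff, ← ofAdd_sub, ← map_sub, ← sub_one_mul, divAut_apply,
    wreathShift_ofAdd_mapCoeff, ← ofAdd_sub, ← map_sub, ← one_sub_mul]

theorem exists_forall_inr_smul_ne [Finite A] [Nontrivial A] (X : Type*)
    [MulAction (WreathProd d A) X] [FaithfulSMul (WreathProd d A) X]
    (D : Finset (Multiplicative (Fin d → ℤ))) (hD : 1 ∉ D) :
    ∃ x : X, ∀ c ∈ D, (inr c : WreathProd d A) • x ≠ x := by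
  by_contra! hfix
  obtain ⟨p, hp, hpA⟩ := Nat.exists_prime_and_dvd (Finite.one_lt_card (α := A)).ne'
  have := Fact.mk hp
  obtain ⟨a, ha⟩ := exists_prime_addOrderOf_dvd_card' p hpA
  let e : ZMod p →+ A := ZMod.lift p ⟨zmultiplesHom A a, by simp [← ha]⟩
  let ρ : Multiplicative (Fin d → ℤ) → AddMonoidAlgebra (ZMod p) (Fin d → ℤ) :=
    fun c => (1 - single c.toAdd 1) * (single (c ^ D.card.factorial).toAdd 1 - 1)
  have hρ : ∏ c ∈ D, ρ c ≠ 0 := by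
    refine Finset.prod_ne_zero_iff.2 fun c hc => mul_ne_zero ?_ ?_
    · exact sub_ne_zero.2 (single_ne_one (toAdd_eq_zero.not.2 (ne_of_mem_of_not_mem hc hD))).symm
    · refine sub_ne_zero.2 (single_ne_one (toAdd_eq_zero.not.2 ?_))
      rw [pow_eq_one_iff_left (Nat.factorial_ne_zero _)]
      exact ne_of_mem_of_not_mem hc hD
  refine hρ (mapCoeff_injective (ZMod.lift_zmultiplesHom_injective ha) ?_)
  refine ofAdd.injective (inl_injective (φ := wreathShift d A)
    (FaithfulSMul.eq_of_smul_eq_smul (α := X) fun x => ?_))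
  obtain ⟨c, hc, hx⟩ := exists_forall_divAut_pow_div_mem_baseStabilizer D hfix x
  have := hx (ofAdd (mapCoeff e (∏ c' ∈ D.erase c, ρ c')))
  rw [divAut_wreathShift_pow_ofAdd_mapCoeff, ← mul_assoc, Finset.mul_prod_erase D ρ hc] at this
  rw [map_zero, ofAdd_zero, map_one, one_smul]
  exact this

theorem nonFoldableSubset_range_inr [Finite A] [Nontrivial A] :
    NonFoldableSubset (Set.range (inr : _ →* WreathProd d A)) :=
  fun X _ _ _ _ hs hfin =>
    exists_injOn_smul_of_forall_exists_smul_ne inr_injective (exists_forall_inr_smul_ne X) hs hfin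

end WreathProd

theorem wreath_finite_nonfoldable_base_general (d : ℕ)
    (A : Type*) [AddCommGroup A] [Finite A] [Nontrivial A] :
    NonFoldableSubset
      (Set.range (fun q : Multiplicative (Fin d → ℤ) =>
        (SemidirectProduct.inr q : WreathProd d A))) ∧
    SchreierGrowthGap (WreathProd d A) (fun n => (n : ℝ) ^ d) :=
  ⟨WreathProd.nonFoldableSubset_range_inr, schreierGrowthGap_of_nonFoldableSubset_range
    SemidirectProduct.inr_injective WreathProd.nonFoldableSubset_range_inr⟩

/-- For `d ≥ 1` and a nontrivial finite abelian group `A`, the canonical copy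
of `ℤ^d` in the wreath product `G = A ≀ ℤ^d` is a non-foldable subset of `G`, and `G` has a
Schreier growth gap `n^d`. -/
theorem wreath_finite_nonfoldable_base (d : ℕ) (hd : 1 ≤ d)
    (A : Type*) [AddCommGroup A] [Finite A] [Nontrivial A] :
    NonFoldableSubset
      (Set.range (fun q : Multiplicative (Fin d → ℤ) =>
        (SemidirectProduct.inr q : WreathProd d A))) ∧
    SchreierGrowthGap (WreathProd d A) (fun n => (n : ℝ) ^ d) :=
  wreath_finite_nonfoldable_base_general d A
end

section
/- Let G be a finitely generated group with an abelian normal subgroup M such that Q = G/M is a finitely generated free abelian group, and let π : G → Q be the quotient map. Suppose N is a subgroup of M that is normal in G and satisfies: (uniformity) any two nontrivial subgroups of N that are normal in G have nontrivial intersection; and (trivial centralizer) every g ∈ G satisfying g n g⁻¹ = n for all n ∈ N belongs to M. Let L ⊆ G be a lift of Q, i.e., a subset such that π restricted to L is a bijection onto Q. Then: (i) L is a non-foldable subset of G; (ii) if moreover N is torsion-free, then for every nontrivial m ∈ N the set L·⟨m⟩ = {l m^k : l ∈ L, k ∈ ℤ} is a non-foldable subset of G. -/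
open scoped IsMulCommutative commutatorElement Pointwise
open MulAction

theorem pow_mul_mul_inv_pow_of_commute {G : Type*} [Group G] {u n : G} (h : Commute u ⁅u, n⁆)
    (j : ℕ) :
    u ^ j * n * (u ^ j)⁻¹ = ⁅u, n⁆ ^ j * n := by
  induction j with
  | zero => simp
  | succ j ih =>
    have hconj : ⁅u, n⁆ * n = u * n * u⁻¹ := by rw [commutatorElement_def]; group
    calc u ^ (j + 1) * n * (u ^ (j + 1))⁻¹ = u * (u ^ j * n * (u ^ j)⁻¹) * u⁻¹ := by group
      _ = ⁅u, n⁆ ^ j * (u * n * u⁻¹) := by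
        rw [ih, ← mul_assoc u, (h.pow_right j).eq]; simp only [mul_assoc]
      _ = ⁅u, n⁆ ^ (j + 1) * n := by rw [← hconj, pow_succ, mul_assoc]

theorem MulAut.pow_factorial_apply_div_mem {A : Type*} [Group A] {B : Subgroup A} [B.Normal]
    [B.FiniteIndex] {φ : MulAut A} (hφ : ∀ a, φ a ∈ B ↔ a ∈ B) {k : ℕ} (hk : B.index ≤ k)
    (a : A) : (φ ^ k.factorial) a / a ∈ B := by
  have hmap : B.map φ.toMonoidHom = B := by
    ext a
    rw [Subgroup.mem_map_equiv, ← hφ, MulEquiv.apply_symm_apply]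
  let σ : Equiv.Perm (A ⧸ B) := (QuotientGroup.congr B B φ hmap).toEquiv
  have hσ : ∀ (j : ℕ) (a : A), (σ ^ j) (a : A ⧸ B) = ((φ ^ j) a : A) := by
    intro j
    induction j with
    | zero => simp
    | succ j ih =>
      intro a
      rw [pow_succ', Equiv.Perm.mul_apply, ih, pow_succ', MulAut.mul_apply]
      rfl
  have hord : σ ^ k.factorial = 1 := by
    rw [← orderOf_dvd_iff_pow_eq_one]
    refine (orderOf_dvd_natCard σ).trans ?_
    rw [Nat.card_perm, ← Subgroup.index_eq_card]
    exact Nat.factorial_dvd_factorial hk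
  rw [← QuotientGroup.eq_iff_div_mem, ← hσ, hord, Equiv.Perm.one_apply]

namespace Subgroup

variable {G : Type*} [Group G]

def IsUniform (N : Subgroup G) : Prop :=
  ∀ N₁ N₂ : Subgroup G, N₁.Normal → N₂.Normal → N₁ ≤ N → N₂ ≤ N → N₁ ≠ ⊥ → N₂ ≠ ⊥ → N₁ ⊓ N₂ ≠ ⊥

theorem IsUniform.inf_biInf_ne_bot {N : Subgroup G} (hN : N.IsUniform) {ι : Type*}
    (s : Finset ι) {f : ι → Subgroup G} (hf : ∀ i ∈ s, (f i).Normal ∧ f i ≤ N ∧ f i ≠ ⊥)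
    {K : Subgroup G} [K.Normal] (hKN : K ≤ N) (hK : K ≠ ⊥) : K ⊓ ⨅ i ∈ s, f i ≠ ⊥ := by
  classical
  induction s using Finset.induction_on generalizing K with
  | empty => simpa using hK
  | insert a s _ ih =>
    obtain ⟨hfa, hfaN, hfa1⟩ := hf a (Finset.mem_insert_self a s)
    rw [Finset.iInf_insert, ← inf_assoc]
    exact ih (fun i hi => hf i (Finset.mem_insert_of_mem hi)) (inf_le_left.trans hKN)
      (hN _ _ ‹_› hfa hKN hfaN hK hfa1)

theorem closure_normal_of_conj_mem {s : Set G} (hs : ∀ x ∈ s, ∀ g : G, g * x * g⁻¹ ∈ s) :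
    (closure s).Normal := by
  have hconj : Group.conjugatesOfSet s ⊆ s := fun x hx => by
    obtain ⟨a, ha, hax⟩ := Group.mem_conjugatesOfSet_iff.1 hx
    obtain ⟨g, rfl⟩ := isConj_iff.1 hax
    exact hs a ha g
  rw [le_antisymm closure_le_normalClosure (closure_mono hconj)]
  infer_instance

theorem commutatorElement_mem_right {N : Subgroup G} [N.Normal] (u : G) {n : G} (hn : n ∈ N) :
    ⁅u, n⁆ ∈ N :=
  mul_mem (Normal.conj_mem ‹_› n hn u) (inv_mem hn)

theorem commutatorElement_mem_of_isMulCommutative_quotient (H : Subgroup G) [H.Normal]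
    [IsMulCommutative (G ⧸ H)] (g u : G) : ⁅g, u⁆ ∈ H := by
  rw [← QuotientGroup.eq_one_iff, ← QuotientGroup.mk'_apply, map_commutatorElement,
    commutatorElement_eq_one_iff_mul_comm, mul_comm]

theorem mem_of_pow_mem_of_isMulTorsionFree_quotient (H : Subgroup G) [H.Normal]
    [IsMulTorsionFree (G ⧸ H)] {g : G} {k : ℕ} (hk : k ≠ 0) (hg : g ^ k ∈ H) : g ∈ H := by
  rwa [← QuotientGroup.eq_one_iff, QuotientGroup.mk_pow, pow_eq_one_iff_left hk,
    QuotientGroup.eq_one_iff] at hg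

theorem commutatorElement_mul_left_of_mem_centralizer {N : Subgroup G} [N.Normal] {c : G}
    (hc : c ∈ centralizer N) (u : G) {y : G} (hy : y ∈ N) : ⁅c * u, y⁆ = ⁅u, y⁆ := by
  have hcomm := mem_centralizer_iff.1 hc (u * y * u⁻¹) (Normal.conj_mem ‹_› y hy u)
  calc ⁅c * u, y⁆ = c * (u * y * u⁻¹) * c⁻¹ * y⁻¹ := by rw [commutatorElement_def]; group
    _ = ⁅u, y⁆ := by rw [← hcomm, commutatorElement_def]; group

theorem conj_commutatorElement_of_mem {N : Subgroup G} [N.Normal]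
    [IsMulCommutative (G ⧸ centralizer N)] (g u : G) {y : G} (hy : y ∈ N) :
    g * ⁅u, y⁆ * g⁻¹ = ⁅u, g * y * g⁻¹⁆ := by
  rw [conjugate_commutatorElement, show g * u * g⁻¹ = ⁅g, u⁆ * u by
    rw [commutatorElement_def]; group]
  exact commutatorElement_mul_left_of_mem_centralizer
    (commutatorElement_mem_of_isMulCommutative_quotient _ g u) u (Normal.conj_mem ‹_› y hy g)

theorem mem_stabilizer_smul_iff {N : Subgroup G} [IsMulCommutative N] {X : Type*}
    [MulAction G X] {a n : G} (ha : a ∈ N) (hn : n ∈ N) (z : X) :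
    a ∈ stabilizer G (n • z) ↔ a ∈ stabilizer G z := by
  rw [mem_stabilizer_iff, mem_stabilizer_iff, smul_smul, setLike_mul_comm ha hn, mul_smul,
    smul_left_cancel_iff]

theorem Normal.le_stabilizer_smul {X : Type*} [MulAction G X] {K : Subgroup G} (hK : K.Normal)
    {y : X} (h : K ≤ stabilizer G y) (g : G) : K ≤ stabilizer G (g • y) := by
  intro a ha
  have hconj : (g⁻¹ * a * g) • y = y := by simpa using h (hK.conj_mem a ha g⁻¹)
  rw [mem_stabilizer_iff, smul_smul]
  conv_rhs => rw [← hconj, smul_smul]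
  group

variable (N : Subgroup G) [N.Normal] [IsMulCommutative N]

def commutatorHom (u : G) : N →* N :=
  (MulAut.conjNormal u).toMonoidHom / MonoidHom.id N

@[simp]
theorem coe_commutatorHom (u : G) (n : N) : (commutatorHom N u n : G) = ⁅u, (n : G)⁆ := by
  simp [commutatorHom, MulAut.conjNormal_apply, commutatorElement_def, div_eq_mul_inv]

end Subgroup

open Subgroup

section DefectSubgroup

variable {G : Type*} [Group G] (N : Subgroup G) [N.Normal]

/-- In additive notation for the `ℤ[G]`-module `N`, this is `(u - 1) (d N + (u - 1) N)`. -/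
def defectSubgroup (u : G) (d : ℕ) : Subgroup G :=
  closure ({⁅u, n ^ d⁆ | n ∈ N} ∪ {⁅u, ⁅u, n⁆⁆ | n ∈ N})

variable {N}

theorem defectSubgroup_le (u : G) (d : ℕ) : defectSubgroup N u d ≤ N := by
  rw [defectSubgroup, closure_le]
  rintro _ (⟨n, hn, rfl⟩ | ⟨n, hn, rfl⟩)
  · exact commutatorElement_mem_right u (pow_mem hn d)
  · exact commutatorElement_mem_right u (commutatorElement_mem_right u hn)

theorem defectSubgroup_normal [IsMulCommutative (G ⧸ centralizer N)] (u : G) (d : ℕ) :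
    (defectSubgroup N u d).Normal := by
  refine closure_normal_of_conj_mem fun x hx g => ?_
  rcases hx with ⟨n, hn, rfl⟩ | ⟨n, hn, rfl⟩
  · refine Or.inl ⟨g * n * g⁻¹, Normal.conj_mem ‹_› n hn g, ?_⟩
    rw [conj_commutatorElement_of_mem g u (pow_mem hn d), conj_pow]
  · refine Or.inr ⟨g * n * g⁻¹, Normal.conj_mem ‹_› n hn g, ?_⟩
    rw [conj_commutatorElement_of_mem g u (commutatorElement_mem_right u hn),
      conj_commutatorElement_of_mem g u hn]

theorem pow_mem_centralizer_of_defectSubgroup_eq_bot [IsMulCommutative N] {u : G} {d : ℕ}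
    (h : defectSubgroup N u d = ⊥) : u ^ d ∈ centralizer N := by
  have hgen : ∀ x ∈ ({⁅u, n ^ d⁆ | n ∈ N} ∪ {⁅u, ⁅u, n⁆⁆ | n ∈ N} : Set G), x = 1 := fun x hx =>
    (mem_bot.1 (h ▸ subset_closure hx : x ∈ (⊥ : Subgroup G)))
  rw [mem_centralizer_iff]
  intro n hn
  have hcomm : Commute u ⁅u, n⁆ :=
    (commutatorElement_eq_one_iff_commute).1 (hgen _ (Or.inr ⟨n, hn, rfl⟩))
  have hpow : ⁅u, n⁆ ^ d = 1 := by
    have := congrArg Subtype.val (map_pow (commutatorHom N u) ⟨n, hn⟩ d)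
    simp only [coe_commutatorHom, SubgroupClass.coe_pow] at this
    rw [← this]
    exact hgen _ (Or.inl ⟨n, hn, rfl⟩)
  have := pow_mul_mul_inv_pow_of_commute hcomm d
  rw [hpow, one_mul, mul_inv_eq_iff_eq_mul] at this
  exact this.symm

theorem defectSubgroup_pow_ne_bot [IsMulCommutative N] [IsMulTorsionFree (G ⧸ centralizer N)]
    {t : G} (ht : t ∉ centralizer N) {h d : ℕ} (hh : h ≠ 0) (hd : d ≠ 0) :
    defectSubgroup N (t ^ h) d ≠ ⊥ := fun hbot => ht <| by
  have hpow := pow_mem_centralizer_of_defectSubgroup_eq_bot hbot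
  rw [← pow_mul] at hpow
  exact mem_of_pow_mem_of_isMulTorsionFree_quotient _ (mul_ne_zero hh hd) hpow

end DefectSubgroup

section CommutatorStabilizer

variable {G : Type*} [Group G] (N : Subgroup G) [N.Normal] [IsMulCommutative N]
  {X : Type*} [MulAction G X]

def commutatorStabilizer (t : G) (z : X) : Subgroup N :=
  ⨅ (r : ℤ) (i : ℤ), ((stabilizer G z).subgroupOf N).comap
    ((commutatorHom N (t ^ r)).comp (MulAut.conjNormal (t ^ i)).toMonoidHom)

variable {N}

theorem mem_commutatorStabilizer {t : G} {z : X} {δ : N} :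
    δ ∈ commutatorStabilizer N t z ↔
      ∀ r i : ℤ, ⁅t ^ r, t ^ i * δ * (t ^ i)⁻¹⁆ ∈ stabilizer G z := by
  simp only [commutatorStabilizer, mem_iInf, mem_comap, MonoidHom.comp_apply, mem_subgroupOf,
    coe_commutatorHom, MulEquiv.coe_toMonoidHom, MulAut.conjNormal_apply]

theorem conjNormal_mem_commutatorStabilizer_iff (t : G) (z : X) (δ : N) :
    MulAut.conjNormal t δ ∈ commutatorStabilizer N t z ↔ δ ∈ commutatorStabilizer N t z := by
  have hshift : ∀ i : ℤ, t ^ i * (t * δ * t⁻¹) * (t ^ i)⁻¹ = t ^ (i + 1) * δ * (t ^ (i + 1))⁻¹ :=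
    fun i => by group
  simp only [mem_commutatorStabilizer, MulAut.conjNormal_apply, hshift]
  exact ⟨fun h r i => by simpa using h r (i - 1), fun h r i => h r (i + 1)⟩

theorem inv_mul_mem_commutatorStabilizer {t : G} {z : X} {n n' : N}
    (hn : t • (n : G) • z = (n : G) • z) (hn' : t • (n' : G) • z = (n' : G) • z) :
    n⁻¹ * n' ∈ commutatorStabilizer N t z := by
  rw [mem_commutatorStabilizer]
  intro r i
  set e : G := ((n⁻¹ * n' : N) : G) with he_def
  have he : e ∈ N := (n⁻¹ * n').2
  have hen : e⁻¹ * n' = n := by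
    rw [he_def, ← coe_inv, ← coe_mul, mul_inv_rev, inv_inv, mul_comm n'⁻¹ n, mul_assoc,
      inv_mul_cancel, mul_one]
  rw [← mem_stabilizer_smul_iff (commutatorElement_mem_right _ (Normal.conj_mem ‹_› e he _)) n'.2]
  have ht : t ∈ stabilizer G ((n' : G) • z) := hn'
  have het : e * t * e⁻¹ ∈ stabilizer G ((n' : G) • z) := by
    rw [mem_stabilizer_iff, mul_smul, mul_smul, smul_smul e⁻¹, hen, hn, smul_smul, ← hen,
      mul_inv_cancel_left]
  have key : ⁅t ^ r, t ^ i * e * (t ^ i)⁻¹⁆ = t ^ (r + i) * (e * t * e⁻¹) ^ (-r) * (t ^ i)⁻¹ := by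
    rw [conj_zpow, commutatorElement_def]; group
  rw [key]
  exact mul_mem (mul_mem (zpow_mem ht _) (zpow_mem het _)) (inv_mem (zpow_mem ht _))

theorem defectSubgroup_le_stabilizer {t : G} {z : X} [(commutatorStabilizer N t z).FiniteIndex]
    {k : ℕ} (hk : (commutatorStabilizer N t z).index ≤ k) :
    defectSubgroup N (t ^ k.factorial) (commutatorStabilizer N t z).index ≤ stabilizer G z := by
  set B := commutatorStabilizer N t z
  rw [defectSubgroup, closure_le]
  rintro _ (⟨n, hn, rfl⟩ | ⟨n, hn, rfl⟩)
  · simpa using mem_commutatorStabilizer.1 (B.pow_index_mem ⟨n, hn⟩) k.factorial 0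
  · have hu : commutatorHom N (t ^ k.factorial) ⟨n, hn⟩ ∈ B := by
      convert MulAut.pow_factorial_apply_div_mem (conjNormal_mem_commutatorStabilizer_iff t z)
        hk ⟨n, hn⟩ using 1
      ext
      simp [← map_pow, MulAut.conjNormal_apply, commutatorElement_def, div_eq_mul_inv]
    simpa using mem_commutatorStabilizer.1 hu k.factorial 0

/-- The `n ∈ N` with `t • n • z = n • z` lie in a single left coset of
`commutatorStabilizer N t z`, so these cosets cover `N` and B. H. Neumann's lemma bounds one of the
indices by `#T`. -/
theorem exists_defectSubgroup_le_stabilizer (z : X) (T : Finset G)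
    (hT : ∀ n ∈ N, ∃ t ∈ T, t • n • z = n • z) :
    ∃ t ∈ T, ∃ d ≠ 0, d ≤ T.card ∧
      defectSubgroup N (t ^ T.card.factorial) d ≤ stabilizer G z := by
  have hrep : ∀ t : G, ∃ w : N, ∀ n : N,
      t • (n : G) • z = (n : G) • z → w⁻¹ * n ∈ commutatorStabilizer N t z := by
    intro t
    by_cases h : ∃ w : N, t • (w : G) • z = (w : G) • z
    · obtain ⟨w, hw⟩ := h
      exact ⟨w, fun n hn => inv_mul_mem_commutatorStabilizer hw hn⟩
    · exact ⟨1, fun n hn => absurd ⟨n, hn⟩ h⟩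
  choose w hw using hrep
  have hcover : ⋃ t ∈ T, w t • (commutatorStabilizer N t z : Set N) = Set.univ := by
    refine Set.eq_univ_of_forall fun n => ?_
    obtain ⟨t, ht, hfix⟩ := hT n n.2
    exact Set.mem_biUnion ht (mem_leftCoset_iff _ |>.2 (hw t n hfix))
  obtain ⟨t, ht, hfin, hidx⟩ := exists_index_le_card_of_leftCoset_cover hcover
  exact ⟨t, ht, _, hfin.index_ne_zero, hidx, defectSubgroup_le_stabilizer hidx⟩

end CommutatorStabilizer

theorem normalClosure_inf_biInf_eq_bot {G : Type*} [Group G] {X : Type*} [MulAction G X]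
    [FaithfulSMul G X] {ι : Type*} (s : Finset ι) {f : ι → Subgroup G}
    (hf : ∀ i ∈ s, (f i).Normal) {w : G} (h : ∀ y : X, w • y = y ∨ ∃ i ∈ s, f i ≤ stabilizer G y) :
    normalClosure {w} ⊓ ⨅ i ∈ s, f i = ⊥ := by
  refine eq_bot_iff.2 fun g hg => mem_bot.2 (eq_of_smul_eq_smul (α := X) fun x => ?_)
  rw [one_smul]
  by_cases hx : ∃ i ∈ s, f i ≤ stabilizer G x
  · obtain ⟨i, hi, hle⟩ := hx
    exact hle (mem_iInf.1 (mem_iInf.1 (mem_inf.1 hg).2 i) hi)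
  · have hcore : normalClosure {w} ≤ (stabilizer G x).normalCore := by
      refine normalClosure_le_normal (Set.singleton_subset_iff.2 fun a => ?_)
      rcases h (a⁻¹ • x) with hfix | ⟨i, hi, hle⟩
      · rw [mem_stabilizer_iff, mul_smul, mul_smul, hfix, smul_inv_smul]
      · exact absurd ⟨i, hi, by simpa using (hf i hi).le_stabilizer_smul hle a⟩ hx
    exact normalCore_le _ (hcore (mem_inf.1 hg).1)

section Core

variable {G : Type*} [Group G] {N : Subgroup G} [N.Normal] [IsMulCommutative N]
  [IsMulCommutative (G ⧸ centralizer N)] [IsMulTorsionFree (G ⧸ centralizer N)]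

/-- If every point of `X` were fixed by `w` or by some `t ∈ T`, then by
`exists_defectSubgroup_le_stabilizer` every point would be fixed by `w` or by one of the nontrivial
normal subgroups `defectSubgroup N (t ^ k!) d`; uniformity makes the intersection of these with
the normal closure of `w` nontrivial, yet it fixes every point. -/
theorem exists_smul_ne_of_isUniform (hN : N.IsUniform) (X : Type*) [MulAction G X]
    [FaithfulSMul G X] (T : Finset G) (hT : ∀ t ∈ T, t ∉ centralizer N) {w : G} (hwN : w ∈ N)
    (hw : w ≠ 1) : ∃ x : X, (∀ t ∈ T, t • x ≠ x) ∧ w • x ≠ x := by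
  by_contra! hbad
  set k := T.card
  set s := T ×ˢ Finset.Icc 1 k
  set f : G × ℕ → Subgroup G := fun p => defectSubgroup N (p.1 ^ k.factorial) p.2
  have hf : ∀ p ∈ s, (f p).Normal ∧ f p ≤ N ∧ f p ≠ ⊥ := by
    rintro ⟨t, d⟩ hp
    obtain ⟨ht, hd⟩ := Finset.mem_product.1 hp
    exact ⟨defectSubgroup_normal _ _, defectSubgroup_le _ _, defectSubgroup_pow_ne_bot (hT t ht)
      (Nat.factorial_ne_zero k) (by have := (Finset.mem_Icc.1 hd).1; omega)⟩
  have hdich : ∀ y : X, w • y = y ∨ ∃ p ∈ s, f p ≤ stabilizer G y := by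
    intro y
    by_contra! hy
    have hcov : ∀ n ∈ N, ∃ t ∈ T, t • n • y = n • y := by
      intro n hn
      by_contra! hn'
      exact hy.1 ((mem_stabilizer_smul_iff hwN hn y).1 (hbad _ hn'))
    obtain ⟨t, ht, d, hd0, hdk, hle⟩ := exists_defectSubgroup_le_stabilizer y T hcov
    exact hy.2 (t, d) (Finset.mem_product.2 ⟨ht, Finset.mem_Icc.2 ⟨by omega, hdk⟩⟩) hle
  exact hN.inf_biInf_ne_bot s hf (normalClosure_le_normal (by simpa using hwN))
    (by simpa [normalClosure_eq_bot_iff] using hw)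
    (normalClosure_inf_biInf_eq_bot s (fun p hp => (hf p hp).1) hdich)

theorem exists_injOn_smul_of_isUniform (hN : N.IsUniform) (X : Type*) [MulAction G X]
    [FaithfulSMul G X] {s : Set G} (hs : s.Finite) {w : G} (hwN : w ∈ N) (hw : w ≠ 1)
    (hsw : ∀ g ∈ s⁻¹ * s, g ∈ centralizer N → g ≠ 1 → w ∈ zpowers g) :
    ∃ x : X, Set.InjOn (fun g => g • x) s := by
  classical
  have hT := (hs.inv.mul hs).sdiff (t := ((centralizer N : Subgroup G) : Set G))
  obtain ⟨x, hxT, hxw⟩ := exists_smul_ne_of_isUniform hN X hT.toFinset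
    (fun t ht => (hT.mem_toFinset.1 ht).2) hwN hw
  refine ⟨x, fun a ha b hb hab => ?_⟩
  have hg : b⁻¹ * a ∈ s⁻¹ * s := Set.mul_mem_mul (Set.inv_mem_inv.2 hb) ha
  have hfix : b⁻¹ * a ∈ stabilizer G x := by
    rw [mem_stabilizer_iff, mul_smul, show a • x = b • x from hab, inv_smul_smul]
  by_contra hne
  have hg1 : b⁻¹ * a ≠ 1 := fun h => hne (inv_mul_eq_one.1 h).symm
  by_cases hgC : b⁻¹ * a ∈ centralizer N
  · exact hxw (zpowers_le.2 hfix (hsw _ hg hgC hg1))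
  · exact hxT _ (hT.mem_toFinset.2 ⟨hg, hgC⟩) hfix

end Core

section Lifts

variable {G : Type*} [Group G]

theorem exists_zpow_ne_one_forall_mem_zpowers {m : G} (hm : ¬IsOfFinOrder m) {J : Set G}
    (hJ : J.Finite) (hJm : J ⊆ zpowers m) :
    ∃ c : ℤ, m ^ c ≠ 1 ∧ ∀ g ∈ J, g ≠ 1 → m ^ c ∈ zpowers g := by
  induction J, hJ using Set.Finite.induction_on with
  | empty => exact ⟨1, by rw [zpow_one]; rintro rfl; exact hm IsOfFinOrder.one, by simp⟩
  | @insert g J _ _ ih =>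
    obtain ⟨c, hc, hcJ⟩ := ih ((Set.subset_insert g J).trans hJm)
    obtain ⟨j, rfl⟩ := mem_zpowers_iff.1 (hJm (Set.mem_insert _ J))
    by_cases hj : m ^ j = 1
    · exact ⟨c, hc, fun g hg hg1 => hcJ g (hg.resolve_left fun h => hg1 (h.trans hj)) hg1⟩
    refine ⟨c * j, fun h => ?_, ?_⟩
    · have hcj : c * j = 0 := by
        by_contra hcj
        exact hm (isOfFinOrder_iff_zpow_eq_one.2 ⟨_, hcj, h⟩)
      rcases mul_eq_zero.1 hcj with rfl | rfl <;> simp_all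
    · rintro g (rfl | hg) hg1
      · rw [mul_comm, zpow_mul]
        exact zpow_mem (mem_zpowers _) c
      · rw [zpow_mul]
        exact zpow_mem (hcJ g hg hg1) j

variable {M : Subgroup G} {L : Set G}

theorem inv_mul_inter_subset_one (hL : Set.InjOn (QuotientGroup.mk : G → G ⧸ M) L) :
    L⁻¹ * L ∩ M ⊆ {1} := by
  rintro _ ⟨⟨x, hx, y, hy, rfl⟩, hxy⟩
  dsimp only at hxy ⊢
  have : x⁻¹ = y := hL hx hy (QuotientGroup.eq.2 (by rwa [inv_inv]))
  rw [Set.mem_singleton_iff, ← this, mul_inv_cancel]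

theorem inv_mul_inter_subset_zpowers (hL : Set.InjOn (QuotientGroup.mk : G → G ⧸ M) L)
    {m : G} (hm : m ∈ M) {S : Set G} (hS : ∀ g ∈ S, ∃ l ∈ L, ∃ k : ℤ, g = l * m ^ k) :
    S⁻¹ * S ∩ M ⊆ zpowers m := by
  rintro _ ⟨⟨x, hx, y, hy, rfl⟩, hxy⟩
  obtain ⟨l, hl, k, hx⟩ := hS _ hx
  obtain ⟨l', hl', k', rfl⟩ := hS _ hy
  rw [inv_eq_iff_eq_inv] at hx
  subst hx
  dsimp only at hxy ⊢
  have hll : l⁻¹ * l' ∈ M := by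
    have := mul_mem (mul_mem (zpow_mem hm k) hxy) (zpow_mem hm (-k'))
    convert this using 1; group
  obtain rfl : l = l' := hL hl hl' (QuotientGroup.eq.2 hll)
  exact mem_zpowers_iff.2 ⟨-k + k', by group⟩

end Lifts

section NonFoldable

variable {G : Type*} [Group G] {N : Subgroup G} [N.Normal] [IsMulCommutative N]
  [IsMulCommutative (G ⧸ centralizer N)] [IsMulTorsionFree (G ⧸ centralizer N)]
  {L : Set G}

theorem nonFoldableSubset_of_injOn (hN : N.IsUniform)
    (hL : Set.InjOn (QuotientGroup.mk : G → G ⧸ centralizer N) L) : NonFoldableSubset L := by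
  intro X _ _ _ s hsL hs
  have hs1 := inv_mul_inter_subset_one (hL.mono hsL)
  rcases N.bot_or_exists_ne_one with rfl | ⟨w, hwN, hw⟩
  · obtain ⟨x⟩ := ‹Nonempty X›
    refine ⟨x, Set.Subsingleton.injOn (fun a ha b hb => ?_) _⟩
    have hba : b⁻¹ * a ∈ centralizer (⊥ : Subgroup G) :=
      mem_centralizer_iff.2 fun y hy => by rw [mem_bot.1 hy, one_mul, mul_one]
    exact (inv_mul_eq_one.1 (hs1 ⟨Set.mul_mem_mul (Set.inv_mem_inv.2 hb) ha, hba⟩)).symm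
  · exact exists_injOn_smul_of_isUniform hN X hs hwN hw fun g hg hgC hg1 =>
      absurd (hs1 ⟨hg, hgC⟩) hg1

theorem nonFoldableSubset_mul_zpowers (hN : N.IsUniform)
    (hL : Set.InjOn (QuotientGroup.mk : G → G ⧸ centralizer N) L) {m : G} (hmN : m ∈ N)
    (hm : ¬IsOfFinOrder m) : NonFoldableSubset {g : G | ∃ l ∈ L, ∃ k : ℤ, g = l * m ^ k} := by
  intro X _ _ _ s hsS hs
  have hmC : m ∈ centralizer N := mem_centralizer_iff.2 fun y hy => setLike_mul_comm hy hmN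
  obtain ⟨c, hc, hcJ⟩ := exists_zpow_ne_one_forall_mem_zpowers hm
    ((hs.inv.mul hs).inter_of_left ((centralizer N : Subgroup G) : Set G))
    (inv_mul_inter_subset_zpowers hL hmC hsS)
  exact exists_injOn_smul_of_isUniform hN X hs (zpow_mem hmN c) hc fun g hg hgC => hcJ g ⟨hg, hgC⟩

end NonFoldable

theorem centralizer_eq_of_isMulCommutative {G : Type*} [Group G] {M N : Subgroup G}
    [IsMulCommutative M] (hNM : N ≤ M) (hcent : ∀ g : G, (∀ x ∈ N, g * x * g⁻¹ = x) → g ∈ M) :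
    centralizer N = M :=
  le_antisymm
    (fun g hg => hcent g fun x hx => by
      rw [← mem_centralizer_iff.1 hg x hx, mul_inv_cancel_right])
    (fun g hg => mem_centralizer_iff.2 fun x hx => setLike_mul_comm (hNM hx) hg)

theorem lift_nonfoldable_of_uniform_module_general (G : Type*) [Group G]
    (M : Subgroup G) [M.Normal] (hM : ∀ a b : ↥M, a * b = b * a)
    (hQ : ∃ d : ℕ, Nonempty ((G ⧸ M) ≃* Multiplicative (Fin d → ℤ)))
    (N : Subgroup G) [N.Normal] (hNM : N ≤ M)
    (huniform : ∀ N₁ N₂ : Subgroup G, N₁.Normal → N₂.Normal → N₁ ≤ N → N₂ ≤ N →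
      N₁ ≠ ⊥ → N₂ ≠ ⊥ → N₁ ⊓ N₂ ≠ ⊥)
    (hcent : ∀ g : G, (∀ x ∈ N, g * x * g⁻¹ = x) → g ∈ M)
    (L : Set G)
    (hlift : Set.BijOn (QuotientGroup.mk : G → G ⧸ M) L Set.univ) :
    NonFoldableSubset L ∧
      ((∀ g : ↥N, g ≠ 1 → ¬IsOfFinOrder g) →
        ∀ m ∈ N, m ≠ 1 →
          NonFoldableSubset {g : G | ∃ l ∈ L, ∃ k : ℤ, g = l * m ^ k}) := by
  have : IsMulCommutative M := isMulCommutative_iff.2 hM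
  have : IsMulCommutative N :=
    .of_setLike_mul_comm fun a ha b hb => setLike_mul_comm (hNM ha) (hNM hb)
  obtain rfl := centralizer_eq_of_isMulCommutative hNM hcent
  obtain ⟨d, ⟨e⟩⟩ := hQ
  have : IsMulCommutative (G ⧸ centralizer N) :=
    ⟨⟨fun a b => e.injective (by rw [map_mul, map_mul, mul_comm])⟩⟩
  have : IsMulTorsionFree (G ⧸ centralizer N) := e.injective.isMulTorsionFree e.toMonoidHom
  refine ⟨nonFoldableSubset_of_injOn huniform hlift.injOn, fun htf m hmN hm1 => ?_⟩
  refine nonFoldableSubset_mul_zpowers huniform hlift.injOn hmN fun h => ?_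
  exact htf ⟨m, hmN⟩ (fun h1 => hm1 (congrArg Subtype.val h1))
    ((Submonoid.isOfFinOrder_coe (H := N.toSubmonoid)).1 h)

/-- Let `G` be a finitely generated group with an abelian normal subgroup
`M` such that `Q = G/M` is finitely generated free abelian, and let `N ≤ M` be a subgroup
normal in `G` that is uniform (any two nontrivial `G`-normal subgroups of `N` intersect
nontrivially) and has trivial centralizer (any `g` centralizing `N` lies in `M`). If
`L ⊆ G` is a lift of `Q` (the quotient map restricted to `L` is a bijection onto `Q`), then:
(i) `L` is a non-foldable subset of `G`; and (ii) if moreover `N` is torsion-free, then for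
every nontrivial `m ∈ N` the set `L·⟨m⟩` is a non-foldable subset of `G`. -/
theorem lift_nonfoldable_of_uniform_module (G : Type*) [Group G] [Group.FG G]
    (M : Subgroup G) [M.Normal] (hM : ∀ a b : ↥M, a * b = b * a)
    (hQ : ∃ d : ℕ, Nonempty ((G ⧸ M) ≃* Multiplicative (Fin d → ℤ)))
    (N : Subgroup G) [N.Normal] (hNM : N ≤ M)
    (huniform : ∀ N₁ N₂ : Subgroup G, N₁.Normal → N₂.Normal → N₁ ≤ N → N₂ ≤ N →
      N₁ ≠ ⊥ → N₂ ≠ ⊥ → N₁ ⊓ N₂ ≠ ⊥)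
    (hcent : ∀ g : G, (∀ x ∈ N, g * x * g⁻¹ = x) → g ∈ M)
    (L : Set G)
    (hlift : Set.BijOn (QuotientGroup.mk : G → G ⧸ M) L Set.univ) :
    NonFoldableSubset L ∧
      ((∀ g : ↥N, g ≠ 1 → ¬IsOfFinOrder g) →
        ∀ m ∈ N, m ≠ 1 →
          NonFoldableSubset {g : G | ∃ l ∈ L, ∃ k : ℤ, g = l * m ^ k}) :=
  lift_nonfoldable_of_uniform_module_general G M hM hQ N hNM huniform hcent L hlift
end
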